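/- Let A be a seminormed ring and let I be a proper ideal of A that is not dense in A. Then I is contained in a spectrally reduced prime ideal of A. In particular, the topological spectrum TopSpec(A) of any seminormed ring is nonempty. -/

import Mathlib

open Filter Topology

/-- A bounded power-multiplicative (nonarchimedean, submultiplicative) ring seminorm
on a seminormed commutative ring. -/
structure IsBddPowMulSeminorm {A : Type*} [SeminormedCommRing A] (φ : A → ℝ) : Prop where
  nonneg : ∀ f, 0 ≤ φ f
  map_zero : φ 0 = 0
  map_one : φ 1 = 1
  map_neg : ∀ f, φ (-f) = φ f
  nonarch : ∀ f g, φ (f + g) ≤ max (φ f) (φ g)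
  submul : ∀ f g, φ (f * g) ≤ φ f * φ g
  pow_mul : ∀ f, ∀ n : ℕ, 1 ≤ n → φ (f ^ n) = φ f ^ n
  bounded : ∃ C > 0, ∀ f, φ f ≤ C * ‖f‖

/-- An ideal is spectrally reduced if it is the kernel of some bounded
power-multiplicative seminorm. -/
def IsSpectrallyReduced {A : Type*} [SeminormedCommRing A] (I : Ideal A) : Prop :=
  ∃ φ : A → ℝ, IsBddPowMulSeminorm φ ∧ ∀ f, f ∈ I ↔ φ f = 0

/-- The topological spectrum: the subspace of `Spec A` consisting of the spectrally
reduced prime ideals, with the topology induced from the Zariski topology. -/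
abbrev TopSpec (A : Type*) [SeminormedCommRing A] : Type _ :=
  {p : PrimeSpectrum A // IsSpectrallyReduced p.asIdeal}

/-! In a nonarchimedean ring `ball 1 1` is a multiplicative submonoid, and an ideal meeting it is
dense, since `1 - (1 - x)ⁿ → 1`. Enlarge `I` to an ideal `m` maximal among those disjoint from
`ball 1 1`; such an ideal is prime. The quotient `A ⧸ m` then has `‖1‖ = 1`, so the smoothing
`x ↦ lim ‖xⁿ‖^(1/n)` of its norm pulls back to a bounded power-multiplicative seminorm on `A`.
Its kernel contains `m` and, since a bounded power-multiplicative seminorm is dominated by the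
norm, is still disjoint from `ball 1 1`; by maximality it is `m`. -/

open Metric

theorem Ideal.dense_of_mem_ball_one {A : Type*} [SeminormedCommRing A] {J : Ideal A} {x : A}
    (hxJ : x ∈ J) (hx : x ∈ ball (1 : A) 1) : Dense (J : Set A) := by
  have hsmall : ‖1 - x‖ < 1 := by rwa [mem_ball, dist_eq_norm, norm_sub_rev] at hx
  have hmem : ∀ n : ℕ, 1 - (1 - x) ^ n ∈ J := fun n =>
    J.mem_of_dvd (by simpa using one_sub_dvd_one_sub_pow (1 - x) n) hxJ
  have hlim : Tendsto (fun n : ℕ => 1 - (1 - x) ^ n) atTop (𝓝 1) := by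
    simpa using tendsto_const_nhds.sub (tendsto_pow_atTop_nhds_zero_of_norm_lt_one hsmall)
  have hone : (1 : A) ∈ J.closure := mem_closure_of_tendsto hlim (.of_forall hmem)
  rw [dense_iff_closure_eq, ← J.coe_closure, (Ideal.eq_top_iff_one _).2 hone, Submodule.top_coe]

theorem Ideal.exists_le_maximal_disjoint {α : Type*} [Semiring α] (S : Set α) {I : Ideal α}
    (hI : Disjoint (I : Set α) S) :
    ∃ m : Ideal α, I ≤ m ∧ Maximal (fun J : Ideal α => Disjoint (J : Set α) S) m := by
  refine zorn_le_nonempty₀ _ (fun c hc hchain J hJ => ⟨sSup c, ?_, fun _ => le_sSup⟩) I hI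
  refine Set.disjoint_left.mpr fun x hx => ?_
  obtain ⟨K, hKc, hxK⟩ := (Submodule.mem_sSup_of_directed ⟨J, hJ⟩ hchain.directedOn).1 hx
  exact Set.disjoint_left.mp (hc hKc) hxK

def ballOneSubmonoid (A : Type*) [SeminormedRing A] [NormOneClass A] [IsUltrametricDist A] :
    Submonoid A where
  carrier := ball 1 1
  one_mem' := mem_ball_self one_pos
  mul_mem' {a b} ha hb := by
    simp only [mem_ball, dist_eq_norm] at ha hb ⊢
    have hb1 : ‖b‖ ≤ 1 := by
      simpa [hb.le] using IsUltrametricDist.norm_add_le_max (b - 1) 1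
    calc ‖a * b - 1‖ = ‖(a - 1) * b + (b - 1)‖ := by rw [sub_mul, one_mul, sub_add_sub_cancel]
      _ ≤ max ‖(a - 1) * b‖ ‖b - 1‖ := IsUltrametricDist.norm_add_le_max _ _
      _ < 1 := max_lt ((norm_mul_le _ _).trans_lt (by nlinarith [norm_nonneg (a - 1)])) hb

section Quotient

variable {A : Type*} [SeminormedCommRing A]

instance Ideal.Quotient.isUltrametricDist [IsUltrametricDist A] (J : Ideal A) :
    IsUltrametricDist (A ⧸ J) := by
  refine IsUltrametricDist.isUltrametricDist_of_forall_norm_add_le_max_norm fun x y => ?_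
  refine le_of_forall_pos_le_add fun ε hε => ?_
  obtain ⟨a, rfl, ha⟩ := Ideal.Quotient.norm_mk_lt x hε
  obtain ⟨b, rfl, hb⟩ := Ideal.Quotient.norm_mk_lt y hε
  calc ‖Ideal.Quotient.mk J a + Ideal.Quotient.mk J b‖ ≤ ‖a + b‖ := by
        rw [← map_add]; exact Ideal.Quotient.norm_mk_le J _
    _ ≤ max ‖a‖ ‖b‖ := IsUltrametricDist.norm_add_le_max a b
    _ ≤ _ := by rw [← max_add_add_right]; exact max_le_max ha.le hb.le

theorem Ideal.Quotient.normOneClass_of_disjoint_ball [NormOneClass A] {J : Ideal A}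
    (hJ : Disjoint (J : Set A) (ball 1 1)) : NormOneClass (A ⧸ J) := by
  refine ⟨le_antisymm (by simpa using Ideal.Quotient.norm_mk_le J 1) (not_lt.mp fun h => ?_)⟩
  obtain ⟨r, hr, hr_lt⟩ := Ideal.Quotient.norm_mk_lt (1 : A ⧸ J) (sub_pos.mpr h)
  have hmem : 1 - r ∈ J := by
    rw [← Ideal.Quotient.eq, map_one, hr]
  refine Set.disjoint_left.mp hJ hmem ?_
  rw [mem_ball, dist_eq_norm, sub_sub_cancel_left, norm_neg]
  linarith

end Quotient

namespace IsBddPowMulSeminorm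

variable {A : Type*} [SeminormedCommRing A] {φ : A → ℝ}

theorem le_norm (hφ : IsBddPowMulSeminorm φ) (f : A) : φ f ≤ ‖f‖ :=
  contraction_of_isPowMul_of_boundedWrt (SeminormedRing.toRingSeminorm A)
    (fun a _ hn => hφ.pow_mul a _ hn) (f := RingHom.id A) hφ.bounded f

def ker (hφ : IsBddPowMulSeminorm φ) : Ideal A where
  carrier := {f | φ f = 0}
  zero_mem' := hφ.map_zero
  add_mem' {f g} hf hg := le_antisymm
    ((hφ.nonarch f g).trans (by simp [show φ f = 0 from hf, show φ g = 0 from hg]))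
    (hφ.nonneg _)
  smul_mem' c f hf := le_antisymm
    ((hφ.submul c f).trans (by simp [show φ f = 0 from hf])) (hφ.nonneg _)

theorem mem_ker (hφ : IsBddPowMulSeminorm φ) {f : A} : f ∈ hφ.ker ↔ φ f = 0 := Iff.rfl

theorem isSpectrallyReduced_ker (hφ : IsBddPowMulSeminorm φ) : IsSpectrallyReduced hφ.ker :=
  ⟨φ, hφ, fun _ => Iff.rfl⟩

theorem disjoint_ker_ball_one (hφ : IsBddPowMulSeminorm φ) :
    Disjoint (hφ.ker : Set A) (ball 1 1) := by
  refine Set.disjoint_left.mpr fun a ha ha1 => ?_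
  have h1a : φ (1 - a) < 1 := by
    refine (hφ.le_norm _).trans_lt ?_
    rwa [mem_ball, dist_eq_norm, norm_sub_rev] at ha1
  have := hφ.nonarch (1 - a) a
  rw [sub_add_cancel, hφ.map_one, hφ.mem_ker.mp ha] at this
  exact absurd this (not_le.mpr (max_lt h1a one_pos))

theorem comp (hφ : IsBddPowMulSeminorm φ) {R : Type*} [SeminormedCommRing R] (g : R →+* A)
    (hg : ∀ x, ‖g x‖ ≤ ‖x‖) : IsBddPowMulSeminorm (φ ∘ g) where
  nonneg _ := hφ.nonneg _
  map_zero := by simp [hφ.map_zero]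
  map_one := by simp [hφ.map_one]
  map_neg _ := by simp [hφ.map_neg]
  nonarch _ _ := by simpa using hφ.nonarch _ _
  submul _ _ := by simpa using hφ.submul _ _
  pow_mul _ n hn := by simpa using hφ.pow_mul _ n hn
  bounded := ⟨1, one_pos, fun x => by simpa using (hφ.le_norm _).trans (hg x)⟩

end IsBddPowMulSeminorm

theorem isBddPowMulSeminorm_smoothingFun_norm (A : Type*) [SeminormedCommRing A] [NormOneClass A]
    [IsUltrametricDist A] : IsBddPowMulSeminorm (smoothingFun (normRingSeminorm A)) := by
  have h1 : normRingSeminorm A 1 ≤ 1 := (norm_one (α := A)).le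
  have hna : IsNonarchimedean (normRingSeminorm A) := IsUltrametricDist.isNonarchimedean_norm
  set ψ := smoothingSeminorm (normRingSeminorm A) h1 hna
  have hpow_one (n : ℕ) : normRingSeminorm A (1 ^ n) = normRingSeminorm A 1 ^ n :=
    show ‖(1 : A) ^ n‖ = ‖(1 : A)‖ ^ n by simp
  exact
    { nonneg := smoothingFun_nonneg _ h1
      map_zero := map_zero ψ
      map_one := (smoothingFun_of_powMul _ h1 fun n _ => hpow_one n).trans norm_one
      map_neg := map_neg_eq_map ψ
      nonarch := isNonarchimedean_smoothingFun _ h1 hna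
      submul := map_mul_le_mul ψ
      pow_mul _ _ hn := isPowMul_smoothingFun _ h1 _ hn
      bounded := ⟨1, one_pos, fun f => (one_mul ‖f‖).symm ▸ smoothingFun_le_self _ f⟩ }

theorem non_dense_ideal_le_spectrally_reduced_prime_general
    {A : Type*} [SeminormedCommRing A] [NormOneClass A]
    (hA : IsNonarchimedean (fun a : A => ‖a‖))
    (I : Ideal A) (hInd : ¬ Dense (I : Set A)) :
    (∃ p : Ideal A, p.IsPrime ∧ IsSpectrallyReduced p ∧ I ≤ p) ∧
      Nonempty (TopSpec A) := by
  have := IsUltrametricDist.isUltrametricDist_of_isNonarchimedean_norm hA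
  have hIS : Disjoint (I : Set A) (ballOneSubmonoid A) :=
    Set.disjoint_left.mpr fun x hxI hx => hInd (Ideal.dense_of_mem_ball_one hxI hx)
  obtain ⟨m, hIm, hm⟩ := Ideal.exists_le_maximal_disjoint _ hIS
  have hprime : m.IsPrime :=
    Ideal.isPrime_of_maximally_disjoint m _ hm.prop fun _ => hm.not_prop_of_gt
  have := Ideal.Quotient.normOneClass_of_disjoint_ball hm.prop
  have hφ := (isBddPowMulSeminorm_smoothingFun_norm (A ⧸ m)).comp (Ideal.Quotient.mk m)
    (Ideal.Quotient.norm_mk_le m)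
  have hker : hφ.ker = m := by
    refine (hm.eq_of_le hφ.disjoint_ker_ball_one fun f hf => ?_).symm
    rw [hφ.mem_ker, Function.comp_apply, Ideal.Quotient.eq_zero_iff_mem.mpr hf]
    exact hφ.map_zero
  have hsr : IsSpectrallyReduced m := hker ▸ hφ.isSpectrallyReduced_ker
  exact ⟨⟨m, hprime, hsr, hIm⟩, ⟨⟨⟨m, hprime⟩, hsr⟩⟩⟩

/-- A non-dense proper ideal of a seminormed ring is contained in a spectrally reduced
prime ideal; in particular, the topological spectrum is nonempty. -/
theorem non_dense_ideal_le_spectrally_reduced_prime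
    {A : Type*} [SeminormedCommRing A] [NormOneClass A]
    (hA : IsNonarchimedean (fun a : A => ‖a‖))
    (I : Ideal A) (hI : I ≠ ⊤) (hInd : ¬ Dense (I : Set A)) :
    (∃ p : Ideal A, p.IsPrime ∧ IsSpectrallyReduced p ∧ I ≤ p) ∧
      Nonempty (TopSpec A) :=
  non_dense_ideal_le_spectrally_reduced_prime_general hA I hInd
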